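/- Let β = 2 + (W_x - W_x^{-1})² + (W_y - W_y^{-1})² + ιωΔ²/D where |W_x| = |W_y| = 1, ω ≠ 0 real, Δ, D > 0. Then the quadratic W_z² - β W_z + 1 = 0 has no root on the unit circle, and hence has exactly one root W_{z∗} with |W_{z∗}| < 1. -/

import Mathlib

/-! A root `z` of `z² - βz + 1` on the unit circle would give `β = z + z⁻¹ = z + conj z ∈ ℝ`.
The roots come in reciprocal pairs `z, z⁻¹`, so when none lies on the unit circle exactly one
lies inside it. For the given `β`, the terms `(W - W⁻¹)²` are real on the unit circle, so
`Im β = ωΔ²/D ≠ 0`. -/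

open ComplexConjugate

namespace Complex

theorem im_sq_sub_inv_eq_zero_of_norm_eq_one {w : ℂ} (hw : ‖w‖ = 1) :
    ((w - w⁻¹) ^ 2).im = 0 := by
  rw [inv_eq_conj hw, sub_conj, sq]
  simp

section ReciprocalQuadratic

variable {β z w : ℂ}

theorem ne_zero_of_sq_sub_mul_add_one_eq_zero (hz : z ^ 2 - β * z + 1 = 0) : z ≠ 0 := by
  rintro rfl
  simp at hz

theorem inv_sq_sub_mul_add_one_eq_zero (hz : z ^ 2 - β * z + 1 = 0) :
    z⁻¹ ^ 2 - β * z⁻¹ + 1 = 0 := by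
  have hz0 := ne_zero_of_sq_sub_mul_add_one_eq_zero hz
  field_simp
  linear_combination hz

theorem eq_inv_of_sq_sub_mul_add_one_eq_zero (hz : z ^ 2 - β * z + 1 = 0)
    (hw : w ^ 2 - β * w + 1 = 0) (hzw : z ≠ w) : w = z⁻¹ := by
  have hsum : z + w = β := by
    have : (z - w) * (z + w - β) = 0 := by linear_combination hz - hw
    simpa [sub_eq_zero, hzw] using this
  exact eq_inv_of_mul_eq_one_right (by linear_combination -hz + z * hsum)

theorem im_eq_zero_of_sq_sub_mul_add_one_eq_zero_of_norm_eq_one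
    (hz : z ^ 2 - β * z + 1 = 0) (hz1 : ‖z‖ = 1) : β.im = 0 := by
  have hz0 := ne_zero_of_sq_sub_mul_add_one_eq_zero hz
  have hβ : β = z + conj z := by
    rw [← inv_eq_conj hz1]
    field_simp
    linear_combination -hz
  simp [hβ]

theorem norm_ne_one_of_sq_sub_mul_add_one_eq_zero (hβ : β.im ≠ 0)
    (hz : z ^ 2 - β * z + 1 = 0) : ‖z‖ ≠ 1 :=
  fun hz1 => hβ (im_eq_zero_of_sq_sub_mul_add_one_eq_zero_of_norm_eq_one hz hz1)

theorem exists_sq_sub_mul_add_one_eq_zero (β : ℂ) : ∃ z : ℂ, z ^ 2 - β * z + 1 = 0 := by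
  obtain ⟨s, hs⟩ := IsAlgClosed.exists_eq_mul_self (discrim 1 (-β) 1)
  obtain ⟨z, hz⟩ := exists_quadratic_eq_zero one_ne_zero ⟨s, hs⟩
  exact ⟨z, by linear_combination hz⟩

theorem existsUnique_sq_sub_mul_add_one_eq_zero_norm_lt_one
    (hβ : ∀ z : ℂ, z ^ 2 - β * z + 1 = 0 → ‖z‖ ≠ 1) :
    ∃! z : ℂ, z ^ 2 - β * z + 1 = 0 ∧ ‖z‖ < 1 := by
  obtain ⟨r, hr⟩ := exists_sq_sub_mul_add_one_eq_zero β
  have hexists : ∃ z : ℂ, z ^ 2 - β * z + 1 = 0 ∧ ‖z‖ < 1 := by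
    rcases (hβ r hr).lt_or_gt with hlt | hgt
    · exact ⟨r, hr, hlt⟩
    · refine ⟨r⁻¹, inv_sq_sub_mul_add_one_eq_zero hr, ?_⟩
      rw [norm_inv]
      exact inv_lt_one_of_one_lt₀ hgt
  refine existsUnique_of_exists_of_unique hexists fun z w ⟨hz, hz1⟩ ⟨hw, hw1⟩ =>
    by_contra fun hzw => ?_
  have hz0 : 0 < ‖z‖ := norm_pos_iff.2 (ne_zero_of_sq_sub_mul_add_one_eq_zero hz)
  rw [eq_inv_of_sq_sub_mul_add_one_eq_zero hz hw hzw, norm_inv, inv_lt_one₀ hz0] at hw1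
  exact hw1.not_gt hz1

end ReciprocalQuadratic

end Complex

/-- With β = 2 + (W_x − W_x⁻¹)² + (W_y − W_y⁻¹)² + ιωΔ²/D, |W_x| = |W_y| = 1,
ω ≠ 0, Δ, D > 0, the quadratic W_z² − β W_z + 1 = 0 has no root on the unit
circle and hence exactly one root of modulus strictly less than 1. -/
theorem stmt14 (Wx Wy : ℂ) (hWx : ‖Wx‖ = 1) (hWy : ‖Wy‖ = 1)
    (ω Δ D : ℝ) (hω : ω ≠ 0) (hΔ : 0 < Δ) (hD : 0 < D) :
    (∀ z : ℂ,
      z ^ 2 - (2 + (Wx - Wx⁻¹) ^ 2 + (Wy - Wy⁻¹) ^ 2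
        + Complex.I * (ω : ℂ) * (Δ : ℂ) ^ 2 / (D : ℂ)) * z + 1 = 0 →
      ‖z‖ ≠ 1) ∧
    ∃! z : ℂ,
      z ^ 2 - (2 + (Wx - Wx⁻¹) ^ 2 + (Wy - Wy⁻¹) ^ 2
        + Complex.I * (ω : ℂ) * (Δ : ℂ) ^ 2 / (D : ℂ)) * z + 1 = 0 ∧
      ‖z‖ < 1 := by
  set β := 2 + (Wx - Wx⁻¹) ^ 2 + (Wy - Wy⁻¹) ^ 2
    + Complex.I * (ω : ℂ) * (Δ : ℂ) ^ 2 / (D : ℂ) with hβ_def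
  have hβ_im : β.im ≠ 0 := by
    have hI : Complex.I * (ω : ℂ) * (Δ : ℂ) ^ 2 / (D : ℂ)
        = ((ω * Δ ^ 2 / D : ℝ) : ℂ) * Complex.I := by
      push_cast
      ring
    rw [hβ_def, hI]
    simp only [Complex.add_im, Complex.im_ofNat, Complex.mul_I_im, Complex.ofReal_re,
      Complex.im_sq_sub_inv_eq_zero_of_norm_eq_one hWx,
      Complex.im_sq_sub_inv_eq_zero_of_norm_eq_one hWy, zero_add]
    positivity
  have hcircle (z : ℂ) := Complex.norm_ne_one_of_sq_sub_mul_add_one_eq_zero (z := z) hβ_im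
  exact ⟨hcircle, Complex.existsUnique_sq_sub_mul_add_one_eq_zero_norm_lt_one hcircle⟩
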